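/- Let p ≥ 0 be an integer, let n > 0 be real with n ≠ 1, let κ ∈ ℂ with κ ∉ ℝ, and let α ∈ ℂ, α ≠ 0, satisfy the transmission boundary conditions J_p(κ) = α·J_p(√n·κ) and J_p'(κ) = α·√n·J_p'(√n·κ). Then ∫₀¹ ( |J_p(κ·r)|² − n·|α|²·|J_p(√n·κ·r)|² )·r dr = 0. -/

import Mathlib

/-!
Lommel's integral
`(b² - a²) ∫₀¹ r J_p(ar) J_p(br) dr = a J_p'(a) J_p(b) - b J_p(a) J_p'(b)`,
a consequence of Bessel's equation, is applied with `b = conj a` for `a = κ` and for `a = √n κ`.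
Since `J_p (conj z) = conj (J_p z)`, the boundary conditions make the two right-hand sides agree
up to the factor `|α|²`, and cancelling `conj κ ^ 2 - κ ^ 2` gives the identity. That factor
vanishes only for purely imaginary `κ = i t`, which cannot satisfy the boundary conditions:
Lommel's integral with `a = κ`, `b = √n κ` would give `∫₀¹ r J_p(κr) J_p(√n κr) dr = 0`, while
`J_p(i t) = i^p I_p(t)` makes that integrand `(-1)^p` times a positive function.
-/

open Complex Real Filter Set

/-- Bessel function of the first kind of integer order `p`. -/
noncomputable def besselJ (p : ℕ) (z : ℂ) : ℂ :=
  ∑' m : ℕ, ((-1 : ℂ) ^ m / ((Nat.factorial m : ℂ) * (Nat.factorial (m + p) : ℂ)))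
    * (z / 2) ^ (2 * m + p)

/-- Derivative of the Bessel function. -/
noncomputable def besselJ' (p : ℕ) (z : ℂ) : ℂ := deriv (besselJ p) z

/-- The ITE determinant function `F_p(κ, n)`. -/
noncomputable def Fp (p : ℕ) (κ : ℂ) (n : ℝ) : ℂ :=
  κ * (besselJ' p κ * besselJ p ((Real.sqrt n : ℂ) * κ)
    - (Real.sqrt n : ℂ) * besselJ p κ * besselJ' p ((Real.sqrt n : ℂ) * κ))

open ComplexConjugate

theorem HasDerivAt.comp_mul_ofReal {f : ℂ → ℂ} {f' a : ℂ} {r : ℝ}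
    (hf : HasDerivAt f f' (a * r)) : HasDerivAt (fun t : ℝ => f (a * t)) (a * f') r := by
  simpa [mul_comm] using (hf.comp (r : ℂ) ((hasDerivAt_id _).const_mul a)).comp_ofReal

section MonomialSeries

variable {𝕜 : Type*} [RCLike 𝕜] {c : ℕ → 𝕜} {e : ℕ → ℕ}

theorem summable_mul_pow (hc : ∀ R : ℝ, Summable fun m => ‖c m‖ * R ^ e m) (z : 𝕜) :
    Summable fun m => c m * z ^ e m :=
  .of_norm_bounded (hc ‖z‖) fun m => by rw [norm_mul, norm_pow]

theorem summable_norm_mul_exponent_mul_pow (hc : ∀ R : ℝ, Summable fun m => ‖c m‖ * R ^ e m)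
    (R : ℝ) : Summable fun m => ‖c m * e m‖ * R ^ e m := by
  refine .of_norm_bounded (hc (2 * |R|)) fun m => ?_
  have he : (e m : ℝ) ≤ 2 ^ e m := by exact_mod_cast Nat.lt_two_pow_self.le
  simp only [norm_mul, norm_pow, RCLike.norm_natCast, Real.norm_eq_abs, mul_pow, abs_norm,
    mul_assoc]
  gcongr

theorem hasDerivAt_tsum_mul_pow (hc : ∀ R : ℝ, Summable fun m => ‖c m‖ * R ^ e m) (z : 𝕜) :
    HasDerivAt (fun w => ∑' m, c m * w ^ e m) (∑' m, c m * e m * z ^ (e m - 1)) z := by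
  have hz : z ∈ Metric.ball (0 : 𝕜) (‖z‖ + 1) := by simp
  have hterm (m : ℕ) (w : 𝕜) :
      HasDerivAt (fun w => c m * w ^ e m) (c m * e m * w ^ (e m - 1)) w := by
    simpa [mul_assoc] using (hasDerivAt_pow (e m) w).const_mul (c m)
  refine hasDerivAt_tsum_of_isPreconnected (summable_norm_mul_exponent_mul_pow hc (‖z‖ + 1))
    Metric.isOpen_ball (convex_ball _ _).isPreconnected (fun m w _ => hterm m w)
    (fun m w hw => ?_) hz (summable_mul_pow hc z) hz
  rw [mem_ball_zero_iff] at hw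
  rw [norm_mul, norm_pow]
  gcongr
  calc ‖w‖ ^ (e m - 1) ≤ (‖z‖ + 1) ^ (e m - 1) := by gcongr
    _ ≤ (‖z‖ + 1) ^ e m := pow_le_pow_right₀ (by simp) (Nat.sub_le _ _)

theorem mul_tsum_mul_pow_pred (z : 𝕜) :
    z * ∑' m, c m * e m * z ^ (e m - 1) = ∑' m, c m * e m * z ^ e m := by
  rw [← tsum_mul_left]
  congr 1 with m
  rcases Nat.eq_zero_or_pos (e m) with h | h
  · simp [h]
  · rw [← Nat.sub_add_cancel h, pow_succ, Nat.add_sub_cancel]; push_cast; ring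

theorem tsum_mul_conj_pow (hc : ∀ m, conj (c m) = c m) (z : 𝕜) :
    ∑' m, c m * conj z ^ e m = conj (∑' m, c m * z ^ e m) := by
  simp [RCLike.conj_tsum, hc]

end MonomialSeries

noncomputable def besselCoeff (p m : ℕ) : ℂ :=
  (-1) ^ m / (m.factorial * (m + p).factorial * 2 ^ (2 * m + p))

theorem besselJ_eq_tsum (p : ℕ) :
    besselJ p = fun z => ∑' m, besselCoeff p m * z ^ (2 * m + p) := by
  funext z
  refine tsum_congr fun m => ?_
  rw [besselCoeff, div_pow]
  field_simp

theorem norm_besselCoeff (p m : ℕ) :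
    ‖besselCoeff p m‖ = ((m.factorial * (m + p).factorial * 2 ^ (2 * m + p) : ℕ) : ℝ)⁻¹ := by
  rw [besselCoeff, norm_div, norm_pow, norm_neg, norm_one, one_pow, one_div]
  exact_mod_cast congrArg Inv.inv (RCLike.norm_natCast (K := ℂ) _)

theorem summable_norm_besselCoeff_mul_pow (p : ℕ) (R : ℝ) :
    Summable fun m => ‖besselCoeff p m‖ * R ^ (2 * m + p) := by
  refine .of_norm_bounded ((Real.summable_pow_div_factorial (R ^ 2)).mul_left (|R| ^ p))
    fun m => ?_
  have hfac : m.factorial ≤ m.factorial * (m + p).factorial * 2 ^ (2 * m + p) :=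
    (Nat.le_mul_of_pos_right _ (Nat.factorial_pos _)).trans
      (Nat.le_mul_of_pos_right _ (by positivity))
  rw [norm_mul, norm_norm, norm_besselCoeff, norm_pow, Real.norm_eq_abs]
  calc _ = |R| ^ p * (R ^ 2) ^ m *
        ((m.factorial * (m + p).factorial * 2 ^ (2 * m + p) : ℕ) : ℝ)⁻¹ := by
        rw [← sq_abs R]; ring
    _ ≤ |R| ^ p * (R ^ 2) ^ m * (m.factorial : ℝ)⁻¹ := by gcongr
    _ = _ := by ring

theorem besselCoeff_succ (p m : ℕ) :
    besselCoeff p (m + 1) * (((2 * (m + 1) + p : ℕ) : ℂ) ^ 2 - (p : ℂ) ^ 2) =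
      -besselCoeff p m := by
  have h1 : (m.factorial : ℂ) ≠ 0 := by exact_mod_cast m.factorial_ne_zero
  have h2 : ((m + p).factorial : ℂ) ≠ 0 := by exact_mod_cast (m + p).factorial_ne_zero
  have h3 : (m : ℂ) + 1 ≠ 0 := by exact_mod_cast m.succ_ne_zero
  have h4 : (m : ℂ) + p + 1 ≠ 0 := by exact_mod_cast (m + p).succ_ne_zero
  rw [besselCoeff, besselCoeff, Nat.factorial_succ, show m + 1 + p = (m + p) + 1 by ring,
    Nat.factorial_succ]
  push_cast
  field_simp
  ring

theorem conj_besselCoeff (p m : ℕ) : conj (besselCoeff p m) = besselCoeff p m := by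
  simp [besselCoeff, map_div₀, map_ofNat]

theorem hasDerivAt_besselJ (p : ℕ) (z : ℂ) :
    HasDerivAt (besselJ p)
      (∑' m, besselCoeff p m * (2 * m + p : ℕ) * z ^ (2 * m + p - 1)) z := by
  rw [besselJ_eq_tsum]
  exact hasDerivAt_tsum_mul_pow (summable_norm_besselCoeff_mul_pow p) z

theorem differentiable_besselJ (p : ℕ) : Differentiable ℂ (besselJ p) :=
  fun z => (hasDerivAt_besselJ p z).differentiableAt

theorem besselJ'_eq_tsum (p : ℕ) (z : ℂ) :
    besselJ' p z = ∑' m, besselCoeff p m * (2 * m + p : ℕ) * z ^ (2 * m + p - 1) :=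
  (hasDerivAt_besselJ p z).deriv

theorem mul_besselJ'_eq_tsum (p : ℕ) :
    (fun z => z * besselJ' p z) =
      fun z => ∑' m, besselCoeff p m * (2 * m + p : ℕ) * z ^ (2 * m + p) := by
  funext z
  rw [besselJ'_eq_tsum, mul_tsum_mul_pow_pred]

theorem hasDerivAt_mul_besselJ' (p : ℕ) (z : ℂ) :
    HasDerivAt (fun z => z * besselJ' p z)
      (∑' m, besselCoeff p m * (2 * m + p : ℕ) * (2 * m + p : ℕ) * z ^ (2 * m + p - 1)) z := by
  rw [mul_besselJ'_eq_tsum]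
  exact hasDerivAt_tsum_mul_pow
    (summable_norm_mul_exponent_mul_pow (summable_norm_besselCoeff_mul_pow p)) z

theorem differentiable_mul_besselJ' (p : ℕ) : Differentiable ℂ fun z => z * besselJ' p z :=
  fun z => (hasDerivAt_mul_besselJ' p z).differentiableAt

/-- Bessel's equation, written with the Euler operator `z d/dz` so that neither a second derivative
nor a division by `z` occurs. -/
theorem besselJ_ode (p : ℕ) (z : ℂ) :
    z * deriv (fun z => z * besselJ' p z) z = (p ^ 2 - z ^ 2) * besselJ p z := by
  have hc := summable_norm_besselCoeff_mul_pow p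
  have hJ := summable_mul_pow hc z
  have hJ'' := summable_mul_pow
    (summable_norm_mul_exponent_mul_pow (summable_norm_mul_exponent_mul_pow hc)) z
  set g : ℕ → ℂ := fun m =>
    besselCoeff p m * (((2 * m + p : ℕ) : ℂ) ^ 2 - p ^ 2) * z ^ (2 * m + p)
  have hg : Summable g :=
    (hJ''.sub (hJ.mul_left ((p : ℂ) ^ 2))).congr fun m => by simp only [g]; ring
  have hg_tsum : ∑' m, g m = -(z ^ 2 * ∑' m, besselCoeff p m * z ^ (2 * m + p)) := by
    rw [hg.tsum_eq_zero_add, ← tsum_mul_left, ← tsum_neg]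
    have hg0 : g 0 = 0 := by simp [g]
    rw [hg0, zero_add]
    refine tsum_congr fun m => ?_
    simp only [g]
    rw [show z ^ (2 * (m + 1) + p) = z ^ (2 * m + p) * z ^ 2 by ring]
    linear_combination (z ^ (2 * m + p) * z ^ 2) * besselCoeff_succ p m
  rw [(hasDerivAt_mul_besselJ' p z).deriv, mul_tsum_mul_pow_pred, besselJ_eq_tsum]
  calc _ = ∑' m, (g m + p ^ 2 * (besselCoeff p m * z ^ (2 * m + p))) :=
        tsum_congr fun m => by simp only [g]; ring
    _ = _ := by rw [hg.tsum_add (hJ.mul_left _), tsum_mul_left, hg_tsum]; ring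

theorem besselJ_conj (p : ℕ) (z : ℂ) : besselJ p (conj z) = conj (besselJ p z) := by
  rw [besselJ_eq_tsum]
  exact tsum_mul_conj_pow (conj_besselCoeff p) z

theorem besselJ'_conj (p : ℕ) (z : ℂ) : besselJ' p (conj z) = conj (besselJ' p z) := by
  rw [besselJ'_eq_tsum, besselJ'_eq_tsum]
  exact tsum_mul_conj_pow (fun m => by simp [conj_besselCoeff, map_ofNat]) z

theorem besselJ_lommel (p : ℕ) (a b : ℂ) :
    (b ^ 2 - a ^ 2) * ∫ r in (0 : ℝ)..1, (r : ℂ) * besselJ p (a * r) * besselJ p (b * r) =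
      a * besselJ' p a * besselJ p b - b * besselJ p a * besselJ' p b := by
  have hJ (c : ℂ) (r : ℝ) :
      HasDerivAt (fun t : ℝ => besselJ p (c * t)) (c * besselJ' p (c * r)) r :=
    (differentiable_besselJ p _).hasDerivAt.comp_mul_ofReal
  have hΘ (c : ℂ) (r : ℝ) : HasDerivAt (fun t : ℝ => c * t * besselJ' p (c * t))
      (c * deriv (fun z => z * besselJ' p z) (c * r)) r :=
    (differentiable_mul_besselJ' p _).hasDerivAt.comp_mul_ofReal
  set J := besselJ p
  set D := deriv (fun z => z * besselJ' p z)
  let W : ℝ → ℂ := fun r =>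
    a * r * besselJ' p (a * r) * J (b * r) - J (a * r) * (b * r * besselJ' p (b * r))
  have hW (r : ℝ) : HasDerivAt W
      (a * D (a * r) * J (b * r) + a * r * besselJ' p (a * r) * (b * besselJ' p (b * r))
        - (a * besselJ' p (a * r) * (b * r * besselJ' p (b * r)) + J (a * r) * (b * D (b * r)))) r :=
    ((hΘ a r).mul (hJ b r)).sub ((hJ a r).mul (hΘ b r))
  -- `besselJ_ode` only gives `r * W' r`, hence the fundamental theorem with derivatives on `Ioo 0 1`.
  have hW' : ∀ r ∈ Ioo (0 : ℝ) 1,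
      HasDerivAt W ((b ^ 2 - a ^ 2) * ((r : ℂ) * J (a * r) * J (b * r))) r := by
    intro r hr
    convert hW r using 1
    have hr0 : (r : ℂ) ≠ 0 := by exact_mod_cast hr.1.ne'
    apply mul_left_cancel₀ hr0
    linear_combination (-J (b * r)) * besselJ_ode p (a * r) + J (a * r) * besselJ_ode p (b * r)
  have hcont : Continuous W := continuous_iff_continuousAt.2 fun r => (hW r).continuousAt
  have hJc : Continuous J := (differentiable_besselJ p).continuous
  have hint : Continuous fun r : ℝ => (b ^ 2 - a ^ 2) * ((r : ℂ) * J (a * r) * J (b * r)) := by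
    fun_prop
  rw [← intervalIntegral.integral_const_mul, intervalIntegral.integral_eq_sub_of_hasDerivAt_of_le
    zero_le_one hcont.continuousOn hW' (hint.intervalIntegrable 0 1)]
  simp [W]
  ring

theorem conj_sq_sub_sq_mul_integral_norm_besselJ_sq (p : ℕ) (a : ℂ) :
    (conj a ^ 2 - a ^ 2) * ((∫ r in (0 : ℝ)..1, ‖besselJ p (a * r)‖ ^ 2 * r : ℝ) : ℂ) =
      a * besselJ' p a * conj (besselJ p a) - conj a * besselJ p a * conj (besselJ' p a) := by
  rw [← besselJ_conj, ← besselJ'_conj, ← besselJ_lommel, ← intervalIntegral.integral_ofReal]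
  congr 1
  refine intervalIntegral.integral_congr fun r _ => ?_
  rw [show conj a * r = conj (a * r) by simp, besselJ_conj]
  push_cast
  rw [← mul_conj']
  ring

theorem integral_mul_besselJ_mul_besselJ_eq_zero {p : ℕ} {κ α s : ℂ} (hs : s ^ 2 ≠ 1)
    (hκ : κ ≠ 0) (hbc1 : besselJ p κ = α * besselJ p (s * κ))
    (hbc2 : besselJ' p κ = α * s * besselJ' p (s * κ)) :
    ∫ r in (0 : ℝ)..1, (r : ℂ) * besselJ p (κ * r) * besselJ p (s * κ * r) = 0 := by
  have hlommel := besselJ_lommel p κ (s * κ)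
  rw [hbc1, hbc2] at hlommel
  refine (mul_eq_zero.1 (hlommel.trans (by ring))).resolve_left ?_
  rw [show (s * κ) ^ 2 - κ ^ 2 = (s ^ 2 - 1) * κ ^ 2 by ring]
  exact mul_ne_zero (sub_ne_zero.2 hs) (pow_ne_zero 2 hκ)

noncomputable def besselI (p : ℕ) (x : ℝ) : ℝ :=
  ∑' m, x ^ (2 * m + p) / (m.factorial * (m + p).factorial * 2 ^ (2 * m + p))

theorem besselI_eq_tsum (p : ℕ) :
    besselI p = fun x => ∑' m, ‖besselCoeff p m‖ * x ^ (2 * m + p) := by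
  funext x
  refine tsum_congr fun m => ?_
  rw [norm_besselCoeff]
  push_cast
  ring

theorem continuous_besselI (p : ℕ) : Continuous (besselI p) := by
  have hc : ∀ R : ℝ, Summable fun m => ‖‖besselCoeff p m‖‖ * R ^ (2 * m + p) := by
    simpa using summable_norm_besselCoeff_mul_pow p
  rw [besselI_eq_tsum]
  exact continuous_iff_continuousAt.2 fun x => (hasDerivAt_tsum_mul_pow hc x).continuousAt

theorem besselI_pos (p : ℕ) {x : ℝ} (hx : 0 < x) : 0 < besselI p x := by
  rw [besselI_eq_tsum]
  refine (summable_norm_besselCoeff_mul_pow p x).tsum_pos (fun m => by positivity) 0 ?_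
  rw [norm_besselCoeff]
  positivity

theorem besselI_neg (p : ℕ) (x : ℝ) : besselI p (-x) = (-1) ^ p * besselI p x := by
  rw [besselI_eq_tsum, ← tsum_mul_left]
  refine tsum_congr fun m => ?_
  rw [neg_pow, pow_add, pow_mul, neg_one_sq, one_pow]
  ring

theorem besselI_mul_besselI_pos (p : ℕ) {s x : ℝ} (hs : 0 < s) (hx : x ≠ 0) :
    0 < besselI p x * besselI p (s * x) := by
  rcases hx.lt_or_gt with hx | hx
  · have h := mul_pos (besselI_pos p (neg_pos.2 hx)) (besselI_pos p (mul_pos hs (neg_pos.2 hx)))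
    have hsq : ((-1 : ℝ) ^ p) ^ 2 = 1 := by rw [← pow_mul, pow_mul', neg_one_sq, one_pow]
    rwa [mul_neg, besselI_neg, besselI_neg, ← mul_mul_mul_comm, ← sq, hsq, one_mul] at h
  · exact mul_pos (besselI_pos p hx) (besselI_pos p (mul_pos hs hx))

theorem besselJ_I_mul (p : ℕ) (x : ℝ) : besselJ p (I * x) = I ^ p * besselI p x := by
  rw [besselJ_eq_tsum, besselI, ofReal_tsum, ← tsum_mul_left]
  refine tsum_congr fun m => ?_
  have h : ((-1 : ℂ) ^ m) ^ 2 = 1 := by rw [← pow_mul, pow_mul', neg_one_sq, one_pow]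
  have hI : (I * x) ^ (2 * m + p) = (-1) ^ m * I ^ p * (x : ℂ) ^ (2 * m + p) := by
    rw [mul_pow, pow_add, pow_mul, I_sq]
  rw [besselCoeff, hI]
  push_cast
  linear_combination
    I ^ p * x ^ (2 * m + p) / (m.factorial * (m + p).factorial * 2 ^ (2 * m + p)) * h

theorem integral_mul_besselJ_mul_besselJ_ne_zero {p : ℕ} {κ : ℂ} (hre : κ.re = 0)
    (him : κ.im ≠ 0) {s : ℝ} (hs : 0 < s) :
    ∫ r in (0 : ℝ)..1, (r : ℂ) * besselJ p (κ * r) * besselJ p (s * κ * r) ≠ 0 := by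
  set t := κ.im
  have hκ : κ = I * t := Complex.ext (by simp [hre]) (by simp [t])
  have hI : (I ^ p) ^ 2 = (-1 : ℂ) ^ p := by rw [← pow_mul, pow_mul', I_sq]
  let g : ℝ → ℝ := fun r => r * (besselI p (t * r) * besselI p (s * (t * r)))
  have hg (r : ℝ) :
      (r : ℂ) * besselJ p (κ * r) * besselJ p (s * κ * r) = (-1) ^ p * (g r : ℂ) := by
    rw [show κ * r = I * ((t * r : ℝ) : ℂ) by rw [hκ]; push_cast; ring,
      show (s : ℂ) * κ * r = I * ((s * (t * r) : ℝ) : ℂ) by rw [hκ]; push_cast; ring,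
      besselJ_I_mul, besselJ_I_mul]
    push_cast [g]
    linear_combination (r * besselI p (t * r) * besselI p (s * (t * r)) : ℂ) * hI
  have hg_pos : 0 < ∫ r in (0 : ℝ)..1, g r := by
    have := continuous_besselI p
    have hg_cont : Continuous g := by fun_prop
    refine intervalIntegral.intervalIntegral_pos_of_pos_on (hg_cont.intervalIntegrable 0 1)
      (fun r hr => ?_) one_pos
    exact mul_pos hr.1 (besselI_mul_besselI_pos p hs (mul_ne_zero him hr.1.ne'))
  rw [intervalIntegral.integral_congr fun r _ => hg r, intervalIntegral.integral_const_mul,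
    intervalIntegral.integral_ofReal]
  exact mul_ne_zero (pow_ne_zero _ (by norm_num)) (ofReal_ne_zero.2 hg_pos.ne')

theorem conj_sq_sub_sq_ne_zero {z : ℂ} (hre : z.re ≠ 0) (him : z.im ≠ 0) :
    conj z ^ 2 - z ^ 2 ≠ 0 := by
  rw [sq_sub_sq]
  refine mul_ne_zero (fun h => hre ?_) (sub_ne_zero.2 fun h => him (conj_eq_iff_im.1 h))
  simpa using congrArg re h

theorem stmt_1_general (p : ℕ) (n : ℝ) (hn : 0 < n) (hn1 : n ≠ 1) (κ : ℂ) (hκ : κ.im ≠ 0)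
    (α : ℂ)
    (hbc1 : besselJ p κ = α * besselJ p ((Real.sqrt n : ℂ) * κ))
    (hbc2 : besselJ' p κ = α * (Real.sqrt n : ℂ) * besselJ' p ((Real.sqrt n : ℂ) * κ)) :
    ∫ r in (0:ℝ)..1,
        (‖besselJ p (κ * (r : ℂ))‖ ^ 2
          - n * ‖α‖ ^ 2
            * ‖besselJ p ((Real.sqrt n : ℂ) * κ * (r : ℂ))‖ ^ 2) * r = 0 := by
  have hs2 : ((√n : ℝ) : ℂ) ^ 2 = n := by rw [← ofReal_pow, Real.sq_sqrt hn.le]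
  have hre : κ.re ≠ 0 := fun hre =>
    integral_mul_besselJ_mul_besselJ_ne_zero hre hκ (Real.sqrt_pos.2 hn)
      (integral_mul_besselJ_mul_besselJ_eq_zero (by rw [hs2]; exact_mod_cast hn1)
        (fun h => hκ (by simp [h])) hbc1 hbc2)
  have h1 := conj_sq_sub_sq_mul_integral_norm_besselJ_sq p κ
  have h2 := conj_sq_sub_sq_mul_integral_norm_besselJ_sq p (√n * κ)
  rw [hbc1, hbc2] at h1
  simp only [map_mul, conj_ofReal] at h1 h2
  set E : ℂ → ℝ := fun a => ∫ r in (0 : ℝ)..1, ‖besselJ p (a * r)‖ ^ 2 * r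
  have hE : (E κ : ℂ) = n * ‖α‖ ^ 2 * E (√n * κ) := by
    refine mul_left_cancel₀ (conj_sq_sub_sq_ne_zero hre hκ) ?_
    linear_combination h1 - α * conj α * h2
      + (conj κ ^ 2 - κ ^ 2) * E (√n * κ) * (α * conj α * hs2 + n * mul_conj' α)
  have hJ := (differentiable_besselJ p).continuous
  calc _ = E κ - n * ‖α‖ ^ 2 * E (√n * κ) := by
        rw [← intervalIntegral.integral_const_mul, ← intervalIntegral.integral_sub
          ((by fun_prop : Continuous _).intervalIntegrable 0 1)
          ((by fun_prop : Continuous _).intervalIntegrable 0 1)]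
        congr 1 with r
        ring
    _ = 0 := by rw [sub_eq_zero]; exact_mod_cast hE

/-- the weighted energy integral vanishes for non-real ITEs. -/
theorem stmt_1 (p : ℕ) (n : ℝ) (hn : 0 < n) (hn1 : n ≠ 1) (κ : ℂ) (hκ : κ.im ≠ 0)
    (α : ℂ) (hα : α ≠ 0)
    (hbc1 : besselJ p κ = α * besselJ p ((Real.sqrt n : ℂ) * κ))
    (hbc2 : besselJ' p κ = α * (Real.sqrt n : ℂ) * besselJ' p ((Real.sqrt n : ℂ) * κ)) :
    ∫ r in (0:ℝ)..1,
        (‖besselJ p (κ * (r : ℂ))‖ ^ 2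
          - n * ‖α‖ ^ 2
            * ‖besselJ p ((Real.sqrt n : ℂ) * κ * (r : ℂ))‖ ^ 2) * r = 0 :=
  stmt_1_general p n hn hn1 κ hκ α hbc1 hbc2
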